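/- Let A, B, C, D be abelian groups and let f : A → B, ψ : A → C, φ : B → D, g : C → D be group homomorphisms such that g ∘ ψ = φ ∘ f and g is injective. Let l be a prime number. If the kernel of ψ is l-divisible and the kernel of φ has no nonzero l-torsion (i.e., x ∈ ker φ and l·x = 0 imply x = 0), then the kernel of f is l-divisible. -/
import Mathlib

/-- Let `f : A → B`, `ψ : A → C`, `φ : B → D`, `g : C → D` be homomorphisms of
abelian groups with `g ∘ ψ = φ ∘ f` and `g` injective, and let `l` be a prime.
If `ker ψ` is `l`-divisible and `ker φ` has no nonzero `l`-torsion, then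
`ker f` is `l`-divisible. -/
theorem ker_l_divisible
    (A B C D : Type*) [AddCommGroup A] [AddCommGroup B]
    [AddCommGroup C] [AddCommGroup D]
    (f : A →+ B) (ψ : A →+ C) (φ : B →+ D) (g : C →+ D)
    (hsquare : ∀ a : A, g (ψ a) = φ (f a)) (hg : Function.Injective g)
    (l : ℕ) (hl : l.Prime)
    (hψ : ∀ a : A, ψ a = 0 → ∃ a' : A, ψ a' = 0 ∧ l • a' = a)
    (hφ : ∀ b : B, φ b = 0 → l • b = 0 → b = 0) :
    ∀ a : A, f a = 0 → ∃ a' : A, f a' = 0 ∧ l • a' = a := by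
  intro a ha
  have hψa : ψ a = 0 := by
    apply hg
    rw [hsquare, ha, map_zero, map_zero]
  obtain ⟨a', ha', hla'⟩ := hψ a hψa
  refine ⟨a', ?_, hla'⟩
  apply hφ
  · rw [← hsquare, ha', map_zero]
  · rw [← map_nsmul, hla', ha]
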